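/- arXiv:2203.11201 — 3 statements merged into one kernel-verified Lean document; each statement's English description precedes it below -/
import Mathlib

section
/- Suppose φ is a conjunction of a set of linear constraints ψ together with the ReLU constraints a_i = max(0, b_i) for i in a finite set I, and rlx(φ) is the conjunction of ψ with the Planet relaxation constraints a_i ≥ 0 and a_i ≥ b_i (and the upper-bound constraints) for each i. Then an assignment α satisfies φ if and only if α satisfies rlx(φ) and the sum-of-infeasibilities f(α) = Σ_i min(a_i − b_i, a_i) is ≤ 0. -/
theorem sat_iff_rlx_and_soi_nonpos {A : Type*} {ι : Type*} [Fintype ι]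
    (ψ : A → Prop) (b a : ι → A → ℝ) (rlx : A → Prop)
    (hover : ∀ x, (ψ x ∧ ∀ i, a i x = max 0 (b i x)) → rlx x)
    (hrlx_lin : ∀ x, rlx x → ψ x)
    (hrlx_planet : ∀ x, rlx x → ∀ i, 0 ≤ a i x ∧ b i x ≤ a i x) :
    ∀ x, (ψ x ∧ ∀ i, a i x = max 0 (b i x)) ↔
      (rlx x ∧ (∑ i, min (a i x - b i x) (a i x)) ≤ 0) := by
  intro x
  constructor
  · rintro ⟨hψ, hrelu⟩
    refine ⟨hover x ⟨hψ, hrelu⟩, le_of_eq ?_⟩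
    apply Finset.sum_eq_zero
    intro i _
    rcases le_total (b i x) 0 with h | h
    · rw [hrelu i, max_eq_left h]
      rw [zero_sub, min_eq_right (by linarith)]
    · rw [hrelu i, max_eq_right h]
      rw [min_eq_left (by linarith)]; ring
  · rintro ⟨hrlx, hsum⟩
    refine ⟨hrlx_lin x hrlx, fun i => ?_⟩
    have hterm : ∀ j, 0 ≤ min (a j x - b j x) (a j x) := fun j =>
      le_min (by linarith [(hrlx_planet x hrlx j).2]) (hrlx_planet x hrlx j).1
    have hz : min (a i x - b i x) (a i x) = 0 := by
      have := (Finset.sum_eq_zero_iff_of_nonneg (fun j _ => hterm j)).mp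
        (le_antisymm hsum (Finset.sum_nonneg (fun j _ => hterm j)))
      exact this i (Finset.mem_univ i)
    rcases min_eq_iff.mp hz with ⟨h1, _⟩ | ⟨h1, _⟩
    · rw [max_eq_right (by linarith [(hrlx_planet x hrlx i).1] : 0 ≤ b i x)]
      linarith
    · rw [h1, max_eq_left]
      linarith [(hrlx_planet x hrlx i).2, h1]
end

section
/- Let u > 0 > l. The set T = {(x, y) : l ≤ x ≤ u, y ≥ 0, y ≥ x, y ≤ (u/(u−l))x − (ul/(u−l))} is exactly the convex hull of the graph {(x, max(0, x)) : l ≤ x ≤ u}. -/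
theorem planet_triangle_eq_convexHull_relu_graph (l u : ℝ) (hl : l < 0) (hu : 0 < u) :
    {p : ℝ × ℝ | l ≤ p.1 ∧ p.1 ≤ u ∧ 0 ≤ p.2 ∧ p.1 ≤ p.2 ∧
        p.2 ≤ (u / (u - l)) * p.1 - (u * l) / (u - l)} =
      convexHull ℝ {p : ℝ × ℝ | p.1 ∈ Set.Icc l u ∧ p.2 = max 0 p.1} := by
  have hul : (0:ℝ) < u - l := by linarith
  set S : Set (ℝ × ℝ) := {p : ℝ × ℝ | p.1 ∈ Set.Icc l u ∧ p.2 = max 0 p.1} with hS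
  apply Set.Subset.antisymm
  · rintro ⟨x, y⟩ ⟨h1, h2, h3, h4, h5⟩
    simp only at h1 h2 h3 h4 h5
    have hA : ((l, (0:ℝ)) : ℝ × ℝ) ∈ S := ⟨⟨le_refl _, hl.le.trans hu.le⟩, by
      simp [max_eq_left hl.le]⟩
    have hB : (((0:ℝ), (0:ℝ)) : ℝ × ℝ) ∈ S := ⟨⟨hl.le, hu.le⟩, by simp⟩
    have hC : ((u, u) : ℝ × ℝ) ∈ S := ⟨⟨hl.le.trans hu.le, le_refl _⟩, by
      simp [max_eq_right hu.le]⟩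
    set a : ℝ := (y - x) / (-l) with ha_def
    set c : ℝ := y / u with hc_def
    set b : ℝ := 1 - a - c with hb_def
    have ha : 0 ≤ a := div_nonneg (by linarith) (by linarith)
    have hc : 0 ≤ c := div_nonneg h3 hu.le
    have h5' : y * (u - l) ≤ u * x - u * l := by
      have h := h5
      rw [div_mul_eq_mul_div, ← sub_div, le_div_iff₀ hul] at h
      linarith
    have hb : 0 ≤ b := by
      have hbe : b = ((-l) * u - u * (y - x) - (-l) * y) / ((-l) * u) := by
        rw [hb_def, ha_def, hc_def]
        field_simp [hl.ne, hu.ne']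
        ring
      rw [hbe]
      apply div_nonneg
      · nlinarith
      · nlinarith
    have key : a • ((l,(0:ℝ)):ℝ×ℝ) + b • (((0:ℝ),(0:ℝ)):ℝ×ℝ) + c • ((u,u):ℝ×ℝ)
        ∈ convexHull ℝ S := by
      have hsum := (convex_convexHull ℝ S).sum_mem
        (t := (Finset.univ : Finset (Fin 3)))
        (w := ![a, b, c]) (z := ![(l, 0), (0, 0), (u, u)]) ?_ ?_ ?_
      · simpa [Fin.sum_univ_three] using hsum
      · intro i _; fin_cases i <;> simpa
      · simp [Fin.sum_univ_three]; rw [hb_def]; ring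
      · intro i _; fin_cases i <;>
          simpa using subset_convexHull ℝ S ‹_›
    have heq : ((x, y) : ℝ × ℝ) =
        a • ((l,(0:ℝ)):ℝ×ℝ) + b • (((0:ℝ),(0:ℝ)):ℝ×ℝ) + c • ((u,u):ℝ×ℝ) := by
      have h1' : a * l + c * u = x := by
        rw [ha_def, hc_def]; field_simp [hl.ne, hu.ne']; ring
      have h2' : c * u = y := by
        rw [hc_def]; field_simp [hu.ne']
      ext <;> simp [Prod.smul_mk, smul_eq_mul] <;> nlinarith [h1', h2']
    rw [heq]; exact key
  · apply convexHull_min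
    · rintro ⟨x, y⟩ ⟨⟨hx1, hx2⟩, hy⟩
      simp only at hx1 hx2 hy
      refine ⟨hx1, hx2, ?_, ?_, ?_⟩ <;> simp only [hy]
      · exact le_max_left _ _
      · exact le_max_right _ _
      · have hrw : (u / (u - l)) * x - (u * l) / (u - l) = (u * x - u * l) / (u - l) := by
          ring
        rw [hrw, le_div_iff₀ hul]
        rcases le_total x 0 with h | h
        · rw [max_eq_left h]; nlinarith
        · rw [max_eq_right h]; nlinarith
    · rintro ⟨x1, y1⟩ ⟨p1, p2, p3, p4, p5⟩ ⟨x2, y2⟩ ⟨q1, q2, q3, q4, q5⟩ s t hs ht hst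
      simp only at p1 p2 p3 p4 p5 q1 q2 q3 q4 q5 ⊢
      have p5' : y1 * (u - l) ≤ u * x1 - u * l := by
        have h := p5; rw [div_mul_eq_mul_div, ← sub_div, le_div_iff₀ hul] at h; linarith
      have q5' : y2 * (u - l) ≤ u * x2 - u * l := by
        have h := q5; rw [div_mul_eq_mul_div, ← sub_div, le_div_iff₀ hul] at h; linarith
      refine ⟨?_, ?_, ?_, ?_, ?_⟩ <;>
        simp only [Prod.smul_mk, Prod.mk_add_mk, smul_eq_mul]
      · nlinarith
      · nlinarith
      · nlinarith
      · nlinarith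
      · rw [div_mul_eq_mul_div, ← sub_div, le_div_iff₀ hul]
        nlinarith [mul_le_mul_of_nonneg_left p5' hs, mul_le_mul_of_nonneg_left q5' ht,
          mul_nonneg (mul_nonneg hs hu.le) (neg_nonneg.mpr hl.le),
          mul_nonneg (mul_nonneg ht hu.le) (neg_nonneg.mpr hl.le)]
end

section
/- Deciding satisfiability of a verification query φ (linear constraints plus ReLU constraints over a finite set I) is equivalent to deciding whether min over the 2^|I| phase patterns f of (inf over α ⊨ rlx(φ) of f(α)) equals 0, assuming rlx(φ) is satisfiable and the SoI satisfies Condition 1 (α ⊨ φ iff α ⊨ rlx(φ) and SoI(α) ≤ 0) and each infimum is attained. -/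
theorem sat_iff_min_phase_pattern_zero {A : Type*} {ι : Type*} [Fintype ι] [DecidableEq ι]
    (ψ : A → Prop) (b a : ι → A → ℝ) (rlx : A → Prop)
    (hrlx_sat : ∃ x, rlx x)
    (hrlx_planet : ∀ x, rlx x → ∀ i, 0 ≤ a i x ∧ b i x ≤ a i x)
    (hcond1 : ∀ x, (ψ x ∧ ∀ i, a i x = max 0 (b i x)) ↔
      (rlx x ∧ (∑ i, min (a i x - b i x) (a i x)) ≤ 0))
    (m : (ι → Bool) → ℝ)
    (hm : ∀ t : ι → Bool,
      IsLeast ((fun x => ∑ i, if t i then a i x - b i x else a i x) '' {x | rlx x}) (m t)) :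
    (∃ x, ψ x ∧ ∀ i, a i x = max 0 (b i x)) ↔
      Finset.univ.inf' Finset.univ_nonempty m = 0 := by
  have hterm : ∀ (t : ι → Bool) x, rlx x → ∀ i,
      (0:ℝ) ≤ (if t i then a i x - b i x else a i x) := by
    intro t x hx i
    rcases hrlx_planet x hx i with ⟨h1, h2⟩
    split <;> linarith
  have hmnn : ∀ t, 0 ≤ m t := by
    intro t
    obtain ⟨⟨x, hx, hfx⟩, _⟩ := hm t
    rw [← hfx]
    exact Finset.sum_nonneg fun i _ => hterm t x hx i
  constructor
  · rintro ⟨x, hψ⟩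
    obtain ⟨hrx, hsoi⟩ := (hcond1 x).mp hψ
    have hminnn : ∀ i ∈ Finset.univ, (0:ℝ) ≤ min (a i x - b i x) (a i x) := by
      intro i _
      rcases hrlx_planet x hrx i with ⟨h1, h2⟩
      exact le_min (by linarith) h1
    have hsum0 : ∑ i, min (a i x - b i x) (a i x) = 0 :=
      le_antisymm hsoi (Finset.sum_nonneg hminnn)
    have hmin0 : ∀ i ∈ Finset.univ, min (a i x - b i x) (a i x) = 0 :=
      (Finset.sum_eq_zero_iff_of_nonneg hminnn).mp hsum0
    set t : ι → Bool := fun i => decide (a i x - b i x ≤ a i x) with ht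
    have hft : ∑ i, (if t i then a i x - b i x else a i x) = 0 := by
      apply Finset.sum_eq_zero
      intro i hi
      have hz := hmin0 i hi
      rcases le_or_gt (a i x - b i x) (a i x) with h | h
      · rw [min_eq_left h] at hz
        have htt : t i = true := decide_eq_true h
        rw [htt, if_pos rfl]; exact hz
      · rw [min_eq_right h.le] at hz
        have htt : t i = false := decide_eq_false (not_le.mpr h)
        rw [htt]; simpa using hz
    have hmt0 : m t = 0 := by
      have hle : m t ≤ 0 := by
        have := (hm t).2 ⟨x, hrx, rfl⟩
        simpa [hft] using this
      exact le_antisymm hle (hmnn t)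
    refine le_antisymm ?_ ?_
    · rw [← hmt0]; exact Finset.inf'_le m (Finset.mem_univ t)
    · exact Finset.le_inf' _ _ fun t _ => hmnn t
  · intro h0
    obtain ⟨t, -, ht⟩ := Finset.exists_mem_eq_inf' Finset.univ_nonempty m
    have hmt0 : m t = 0 := ht.symm.trans h0
    obtain ⟨⟨x, hx, hfx⟩, -⟩ := hm t
    rw [hmt0] at hfx
    have hall := (Finset.sum_eq_zero_iff_of_nonneg (fun i _ => hterm t x hx i)).mp hfx
    refine ⟨x, (hcond1 x).mpr ⟨hx, ?_⟩⟩
    apply Finset.sum_nonpos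
    intro i hi
    have h0i := hall i (Finset.mem_univ i)
    cases hti : t i <;> rw [hti] at h0i <;> simp at h0i
    · rw [← h0i]; exact min_le_right _ _
    · have : a i x - b i x = 0 := h0i
      rw [← this]; exact min_le_left _ _
end
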